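/- arXiv:1210.6459 — 2 statements merged into one kernel-verified Lean document; each statement's English description precedes it below -/
import Mathlib

section
/- Let C be a code in F_2^n with covering radius ρ containing the all-zero vector 0, such that C_ρ = 1 + C. Then every nonzero codeword γ ∈ C satisfies wt(γ) ≤ n − ρ. -/
/-- Vertices of the binary Hamming graph of length `n`, identified with `F_2^n`. -/
abbrev V (n : ℕ) := Fin n → ZMod 2

/-- Distance of a vertex `α` from a code `C`: `d(α,C) = min_{β ∈ C} d(α,β)`. -/
noncomputable def distTo {n : ℕ} (C : Set (V n)) (α : V n) : ℕ :=
  sInf (hammingDist α '' C)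

/-- Covering radius of a code: the maximum over all vertices of the distance to the code. -/
noncomputable def coveringRadius {n : ℕ} (C : Set (V n)) : ℕ :=
  sSup (Set.range (distTo C))

/-- A code `C` is completely regular if for every `i` and `k`, the number of codewords at
Hamming distance `k` from a vertex `ν` with `d(ν,C) = i` depends only on `i` and `k`. -/
def CompletelyRegular {n : ℕ} (C : Set (V n)) : Prop :=
  ∀ (i k : ℕ) (ν μ : V n), distTo C ν = i → distTo C μ = i →
    {β ∈ C | hammingDist ν β = k}.ncard = {β ∈ C | hammingDist μ β = k}.ncard

/-- `δ` is the minimum distance of `C`: the least Hamming distance between distinct codewords. -/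
def IsMinDist {n : ℕ} (C : Set (V n)) (δ : ℕ) : Prop :=
  (∀ α ∈ C, ∀ β ∈ C, α ≠ β → δ ≤ hammingDist α β) ∧
  (∃ α ∈ C, ∃ β ∈ C, α ≠ β ∧ hammingDist α β = δ)

theorem distTo_le_hammingDist {n : ℕ} {C : Set (V n)} (α : V n) {β : V n} (hβ : β ∈ C) :
    distTo C α ≤ hammingDist α β :=
  Nat.sInf_le ⟨β, hβ, rfl⟩

theorem hammingNorm_one_add {n : ℕ} (γ : V n) : hammingNorm (1 + γ) = n - hammingNorm γ := by
  have hsupport : (Finset.univ.filter fun i => (1 + γ) i ≠ 0) =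
      (Finset.univ.filter fun i => γ i ≠ 0)ᶜ := by
    ext i
    have key : ∀ x : ZMod 2, 1 + x ≠ 0 ↔ x = 0 := by decide
    simpa using key (γ i)
  rw [hammingNorm, hammingNorm, hsupport, Finset.card_compl, Fintype.card_fin]

/-- If `0 ∈ C` and `C_ρ = 1 + C` where `ρ` is the covering radius, then every nonzero
codeword has weight at most `n - ρ`. -/
theorem stmt_3 {n : ℕ} (C : Set (V n)) (h0 : (0 : V n) ∈ C)
    (h : {α : V n | distTo C α = coveringRadius C} = (fun c : V n => 1 + c) '' C) :
    ∀ γ ∈ C, γ ≠ 0 → hammingNorm γ ≤ n - coveringRadius C := by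
  intro γ hγ _
  have hfar : distTo C (1 + γ) = coveringRadius C := by
    change 1 + γ ∈ {α : V n | distTo C α = coveringRadius C}
    rw [h]
    exact ⟨γ, hγ, rfl⟩
  have hρ : coveringRadius C ≤ n - hammingNorm γ := by
    calc coveringRadius C = distTo C (1 + γ) := hfar.symm
      _ ≤ hammingDist (1 + γ) 0 := distTo_le_hammingDist _ h0
      _ = n - hammingNorm γ := by rw [hammingDist_zero_right, hammingNorm_one_add]
  have hwt : hammingNorm γ ≤ n := hammingNorm_le_card_fintype.trans (Fintype.card_fin n).le
  omega
end

section
/- Let C be a completely regular code in F_2^n with |C| > 1, containing the all-zero vector 0, whose minimum distance δ satisfies δ > max(2, n/2) and δ < n. Then C is equidistant: for all distinct codewords α, β ∈ C, d(α, β) = δ. -/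
/-! ### Auxiliary lemmas -/

lemma hd_def {n : ℕ} (x y : V n) :
    hammingDist x y = (Finset.univ.filter fun i => x i ≠ y i).card := rfl

/-- Flip coordinate `j` of a vertex. -/
def flp {n : ℕ} (x : V n) (j : Fin n) : V n := Function.update x j (x j + 1)

lemma flp_apply {n : ℕ} (x : V n) (j i : Fin n) :
    flp x j i = if i = j then x j + 1 else x i := by
  rcases eq_or_ne i j with rfl | h
  · simp [flp]
  · simp [flp, Function.update_of_ne h, h]

lemma zmod2_ne_iff : ∀ (a b : ZMod 2), a ≠ b ↔ a = b + 1 := by decide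

lemma hd_flp_of_eq {n : ℕ} {x c : V n} {j : Fin n} (h : c j = x j) :
    hammingDist (flp x j) c = hammingDist x c + 1 := by
  rw [hd_def, hd_def]
  have hins : (Finset.univ.filter fun i => flp x j i ≠ c i)
      = insert j (Finset.univ.filter fun i => x i ≠ c i) := by
    ext i
    rcases eq_or_ne i j with rfl | hij
    · simp [flp_apply, h]
    · simp [flp_apply, hij]
  rw [hins, Finset.card_insert_of_notMem (by simp [h])]

lemma hd_flp_of_ne {n : ℕ} {x c : V n} {j : Fin n} (h : c j ≠ x j) :
    hammingDist x c = hammingDist (flp x j) c + 1 := by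
  rw [hd_def, hd_def]
  have hcj : c j = x j + 1 := (zmod2_ne_iff _ _).mp h
  have hins : (Finset.univ.filter fun i => x i ≠ c i)
      = insert j (Finset.univ.filter fun i => flp x j i ≠ c i) := by
    ext i
    rcases eq_or_ne i j with rfl | hij
    · simp [flp_apply, hcj]
    · simp [flp_apply, hij]
  rw [hins, Finset.card_insert_of_notMem (by simp [flp_apply, hcj])]

lemma distTo_zero {n : ℕ} {C : Set (V n)} {c : V n} (h : c ∈ C) : distTo C c = 0 :=
  Nat.sInf_eq_zero.mpr (Or.inl ⟨c, h, hammingDist_self c⟩)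

lemma hd_flp_self {n : ℕ} (x : V n) (j : Fin n) : hammingDist (flp x j) x = 1 := by
  have := hd_flp_of_eq (x := x) (c := x) (j := j) rfl
  rw [hammingDist_self] at this
  omega

lemma distTo_flp {n : ℕ} {C : Set (V n)} {c : V n} (hc : c ∈ C)
    (hmin3 : ∀ a ∈ C, ∀ b ∈ C, a ≠ b → 3 ≤ hammingDist a b) (j : Fin n) :
    distTo C (flp c j) = 1 := by
  apply le_antisymm
  · exact Nat.sInf_le ⟨c, hc, hd_flp_self c j⟩
  · by_contra h
    push_neg at h
    have h0 : distTo C (flp c j) = 0 := by omega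
    rcases Nat.sInf_eq_zero.mp h0 with hmem | hemp
    · obtain ⟨b, hb, hdb⟩ := hmem
      have hbe : flp c j = b := hammingDist_eq_zero.mp hdb
      subst hbe
      rcases eq_or_ne (flp c j) c with he | hne
      · have := hd_flp_self c j
        rw [he, hammingDist_self] at this
        omega
      · have := hmin3 _ hb _ hc hne
        rw [hd_flp_self c j] at this
        omega
    · exact absurd hemp (Set.nonempty_iff_ne_empty.mp ⟨1, c, hc, hd_flp_self c j⟩)

lemma ncard_sep {n : ℕ} (C : Set (V n)) (P : V n → Prop) [DecidablePred P] :
    {β ∈ C | P β}.ncard = (C.toFinite.toFinset.filter P).card := by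
  rw [← Set.ncard_coe_finset]
  congr 1
  ext x
  simp

lemma sum_card_filter_ne_zero {n : ℕ} (S : Finset (V n)) :
    ∑ j : Fin n, (S.filter fun c => c j ≠ 0).card = ∑ c ∈ S, hammingDist 0 c := by
  simp only [Finset.card_filter]
  rw [Finset.sum_comm]
  apply Finset.sum_congr rfl
  intro c _
  rw [hd_def]
  simp only [Finset.card_filter, Pi.zero_apply]
  apply Finset.sum_congr rfl
  intro j _
  by_cases h : c j = 0 <;> simp [h, Ne.symm, eq_comm]

lemma mul_ite_ite (P Q : Prop) [Decidable P] [Decidable Q] :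
    ((if P then (1:ℕ) else 0) * (if Q then 1 else 0)) = if P ∧ Q then 1 else 0 := by
  split_ifs <;> simp_all

lemma hd_add_two_inter {n : ℕ} (c γ : V n) :
    hammingDist c γ + 2 * (Finset.univ.filter fun j => c j ≠ 0 ∧ γ j ≠ 0).card
      = hammingDist 0 c + hammingDist 0 γ := by
  simp only [hd_def, Finset.card_filter, Finset.mul_sum, ← Finset.sum_add_distrib]
  apply Finset.sum_congr rfl
  intro j _
  simp only [Pi.zero_apply]
  have : ∀ a b : ZMod 2, ((if a ≠ b then 1 else 0) + 2 * (if a ≠ 0 ∧ b ≠ 0 then 1 else 0) : ℕ)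
      = (if (0:ZMod 2) ≠ a then 1 else 0) + (if (0:ZMod 2) ≠ b then 1 else 0) := by decide
  exact this (c j) (γ j)

/-- A completely regular code with `|C| > 1`, `0 ∈ C` and `max(2, n/2) < δ < n` is
equidistant: every two distinct codewords are at distance `δ`. -/
theorem stmt_7 {n δ : ℕ} (C : Set (V n)) (hcr : CompletelyRegular C)
    (hcard : 1 < C.ncard) (h0 : (0 : V n) ∈ C) (hmin : IsMinDist C δ)
    (hδ2 : 2 < δ) (hlow : n < 2 * δ) (hhigh : δ < n) :
    ∀ α ∈ C, ∀ β ∈ C, α ≠ β → hammingDist α β = δ := by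
  classical
  intro α hα β hβ hne
  by_contra hdne
  have hmin3 : ∀ a ∈ C, ∀ b ∈ C, a ≠ b → 3 ≤ hammingDist a b :=
    fun a ha b hb h => le_trans (by omega) (hmin.1 a ha b hb h)
  set CF := C.toFinite.toFinset with hCFdef
  have hmemCF : ∀ x : V n, x ∈ CF ↔ x ∈ C := fun x => Set.Finite.mem_toFinset _
  -- complete regularity in Finset form
  have hcr' : ∀ (k : ℕ) (ν μ : V n), distTo C ν = distTo C μ →
      (CF.filter fun c => hammingDist ν c = k).card
        = (CF.filter fun c => hammingDist μ c = k).card := by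
    intro k ν μ h
    have h2 := hcr (distTo C μ) k ν μ h rfl
    rwa [ncard_sep, ncard_sep] at h2
  -- transfer existence of a distance to a weight
  have htrans : ∀ a ∈ C, ∀ w : ℕ, (∃ b ∈ C, hammingDist a b = w) →
      ∃ c ∈ CF, hammingDist 0 c = w := by
    intro a ha w hw
    obtain ⟨b, hb, hwb⟩ := hw
    have h2 := hcr' w a 0 (by rw [distTo_zero ha, distTo_zero h0])
    have hpos : 0 < (CF.filter fun c => hammingDist a c = w).card :=
      Finset.card_pos.mpr ⟨b, Finset.mem_filter.mpr ⟨(hmemCF b).mpr hb, hwb⟩⟩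
    rw [h2] at hpos
    obtain ⟨c, hc⟩ := Finset.card_pos.mp hpos
    obtain ⟨hc1, hc2⟩ := Finset.mem_filter.mp hc
    exact ⟨c, hc1, hc2⟩
  -- a codeword of weight δ exists
  obtain ⟨α₀, hα₀, β₀, hβ₀, hne₀, hd₀⟩ := hmin.2
  obtain ⟨cδ, hcδ, hcδw⟩ := htrans α₀ hα₀ δ ⟨β₀, hβ₀, hd₀⟩
  -- maximum weight e
  have hCFne : CF.Nonempty := ⟨0, (hmemCF 0).mpr h0⟩
  set e := CF.sup (fun c => hammingDist 0 c) with he_def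
  have he_ge : ∀ c ∈ CF, hammingDist 0 c ≤ e := fun c hc => Finset.le_sup hc
  obtain ⟨ce, hce, hcew⟩ := Finset.exists_mem_eq_sup CF hCFne (fun c => hammingDist 0 c)
  rw [← he_def] at hcew
  clear_value e
  have hw0 : δ < hammingDist α β := lt_of_le_of_ne (hmin.1 α hα β hβ hne) (Ne.symm hdne)
  obtain ⟨cw, hcw, hcww⟩ := htrans α hα (hammingDist α β) ⟨β, hβ, rfl⟩
  have heδ : δ < e := lt_of_lt_of_le (hcww ▸ hw0) (he_ge cw hcw)
  set D := CF.filter (fun c => hammingDist 0 c = δ) with hD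
  set E := CF.filter (fun c => hammingDist 0 c = e) with hE
  have hDmem : cδ ∈ D := Finset.mem_filter.mpr ⟨hcδ, hcδw⟩
  have hEmem : ce ∈ E := Finset.mem_filter.mpr ⟨hce, hcew.symm⟩
  have hlevel1 : ∀ j : Fin n, distTo C (flp 0 j) = 1 := distTo_flp h0 hmin3
  -- the δ-class covers each coordinate equally often
  have hDfilter : ∀ j : Fin n, (D.filter fun c => c j ≠ 0)
      = CF.filter (fun c => hammingDist (flp 0 j) c = δ - 1) := by
    intro j
    rw [hD, Finset.filter_filter]
    apply Finset.filter_congr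
    intro c hcC
    constructor
    · rintro ⟨hwc, hcj⟩
      have h5 := hd_flp_of_ne (x := (0:V n)) (c := c) (j := j) (by simpa using hcj)
      omega
    · intro hdc
      by_cases hcj : c j = (0:V n) j
      · have h3 := hd_flp_of_eq (x := (0:V n)) (c := c) (j := j) hcj
        rcases eq_or_ne c 0 with rfl | hc0
        · rw [hammingDist_self] at h3; omega
        · have h4 := hmin.1 _ h0 _ ((hmemCF c).mp hcC) (Ne.symm hc0)
          omega
      · have h5 := hd_flp_of_ne (x := (0:V n)) (c := c) (j := j) hcj
        exact ⟨by omega, by simpa using hcj⟩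
  have hp : ∀ j j' : Fin n, (D.filter fun c => c j ≠ 0).card = (D.filter fun c => c j' ≠ 0).card := by
    intro j j'
    rw [hDfilter j, hDfilter j']
    exact hcr' (δ - 1) _ _ (by rw [hlevel1 j, hlevel1 j'])
  -- the e-class covers each coordinate equally often
  have hEfilter : ∀ j : Fin n, (E.filter fun c => c j = 0)
      = CF.filter (fun c => hammingDist (flp 0 j) c = e + 1) := by
    intro j
    rw [hE, Finset.filter_filter]
    apply Finset.filter_congr
    intro c hcC
    constructor
    · rintro ⟨hwc, hcj⟩
      have h3 := hd_flp_of_eq (x := (0:V n)) (c := c) (j := j) (by simpa using hcj)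
      omega
    · intro hdc
      by_cases hcj : c j = (0:V n) j
      · have h3 := hd_flp_of_eq (x := (0:V n)) (c := c) (j := j) hcj
        exact ⟨by omega, by simpa using hcj⟩
      · have h5 := hd_flp_of_ne (x := (0:V n)) (c := c) (j := j) hcj
        have h6 := he_ge c hcC
        omega
  have hqeq : ∀ j j' : Fin n, (E.filter fun c => c j = 0).card = (E.filter fun c => c j' = 0).card := by
    intro j j'
    rw [hEfilter j, hEfilter j']
    exact hcr' (e + 1) _ _ (by rw [hlevel1 j, hlevel1 j'])
  have hsplit : ∀ j : Fin n, (E.filter fun c => c j = 0).card + (E.filter fun c => c j ≠ 0).card = E.card :=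
    fun j => Finset.card_filter_add_card_filter_not (p := fun c : V n => c j = 0)
  have hq : ∀ j j' : Fin n, (E.filter fun c => c j ≠ 0).card = (E.filter fun c => c j' ≠ 0).card := by
    intro j j'
    linarith [hsplit j, hsplit j', hqeq j j']
  have hn0 : 0 < n := by omega
  set j₀ : Fin n := ⟨0, hn0⟩ with hj₀
  set p := (D.filter fun c => c j₀ ≠ 0).card with hpdef
  set q := (E.filter fun c => c j₀ ≠ 0).card with hqdef
  clear_value p q
  -- n·p = δ·|D| and n·q = e·|E|
  have h1 : ∑ j : Fin n, (D.filter fun c => c j ≠ 0).card = n * p := by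
    have hh : ∀ j : Fin n, (D.filter fun c => c j ≠ 0).card = p :=
      fun j => (hp j j₀).trans hpdef.symm
    rw [Finset.sum_congr rfl (fun j _ => hh j), Finset.sum_const, Finset.card_univ,
      Fintype.card_fin, smul_eq_mul]
  have h2 := sum_card_filter_ne_zero D
  have h3 : ∑ c ∈ D, hammingDist 0 c = δ * D.card := by
    rw [Finset.sum_congr rfl (fun c hc => (Finset.mem_filter.mp hc).2), Finset.sum_const,
      smul_eq_mul, mul_comm]
  have hnp : n * p = δ * D.card := by rw [← h1, h2, h3]
  have h1' : ∑ j : Fin n, (E.filter fun c => c j ≠ 0).card = n * q := by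
    have hh : ∀ j : Fin n, (E.filter fun c => c j ≠ 0).card = q :=
      fun j => (hq j j₀).trans hqdef.symm
    rw [Finset.sum_congr rfl (fun j _ => hh j), Finset.sum_const, Finset.card_univ,
      Fintype.card_fin, smul_eq_mul]
  have h2' := sum_card_filter_ne_zero E
  have h3' : ∑ c ∈ E, hammingDist 0 c = e * E.card := by
    rw [Finset.sum_congr rfl (fun c hc => (Finset.mem_filter.mp hc).2), Finset.sum_const,
      smul_eq_mul, mul_comm]
  have hnq : n * q = e * E.card := by rw [← h1', h2', h3']
  -- cross double count
  have hcross : n * (p * q) = ∑ c ∈ D, ∑ γ ∈ E,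
      (Finset.univ.filter fun j => c j ≠ 0 ∧ γ j ≠ 0).card := by
    calc n * (p * q)
        = ∑ j : Fin n, (D.filter fun c => c j ≠ 0).card * (E.filter fun γ => γ j ≠ 0).card := by
          have hh : ∀ j : Fin n, (D.filter fun c => c j ≠ 0).card * (E.filter fun γ => γ j ≠ 0).card
              = p * q := fun j => by rw [hp j j₀, hq j j₀, hpdef, hqdef]
          rw [Finset.sum_congr rfl (fun j _ => hh j), Finset.sum_const, Finset.card_univ,
            Fintype.card_fin, smul_eq_mul]
      _ = ∑ j : Fin n, ∑ c ∈ D, ∑ γ ∈ E, (if c j ≠ 0 ∧ γ j ≠ 0 then 1 else 0) := by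
          apply Finset.sum_congr rfl
          intro j _
          rw [Finset.card_filter, Finset.card_filter, Finset.sum_mul_sum]
          simp_rw [mul_ite_ite]
      _ = ∑ c ∈ D, ∑ j : Fin n, ∑ γ ∈ E, (if c j ≠ 0 ∧ γ j ≠ 0 then 1 else 0) := Finset.sum_comm
      _ = ∑ c ∈ D, ∑ γ ∈ E, ∑ j : Fin n, (if c j ≠ 0 ∧ γ j ≠ 0 then 1 else 0) := by
          exact Finset.sum_congr rfl (fun c _ => Finset.sum_comm)
      _ = ∑ c ∈ D, ∑ γ ∈ E, (Finset.univ.filter fun j => c j ≠ 0 ∧ γ j ≠ 0).card :=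
          Finset.sum_congr rfl fun c _ => Finset.sum_congr rfl fun γ _ =>
            (Finset.card_filter _ _).symm
  -- pointwise bound
  have hbound : ∀ c ∈ D, ∀ γ ∈ E,
      2 * (Finset.univ.filter fun j => c j ≠ 0 ∧ γ j ≠ 0).card ≤ e := by
    intro c hc γ hγ
    obtain ⟨hcC, hcwt⟩ := Finset.mem_filter.mp hc
    obtain ⟨hγC, hγwt⟩ := Finset.mem_filter.mp hγ
    have hne2 : c ≠ γ := fun h => by
      rw [h, hγwt] at hcwt
      exact absurd hcwt.symm (Nat.ne_of_lt heδ)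
    have hd := hmin.1 c ((hmemCF c).mp hcC) γ ((hmemCF γ).mp hγC) hne2
    have hid := hd_add_two_inter c γ
    rw [hcwt, hγwt] at hid
    linarith
  have hle : 2 * (n * (p * q)) ≤ D.card * (E.card * e) := by
    rw [hcross]
    calc 2 * ∑ c ∈ D, ∑ γ ∈ E, (Finset.univ.filter fun j => c j ≠ 0 ∧ γ j ≠ 0).card
        = ∑ c ∈ D, ∑ γ ∈ E, 2 * (Finset.univ.filter fun j => c j ≠ 0 ∧ γ j ≠ 0).card := by
          simp [Finset.mul_sum]
      _ ≤ ∑ c ∈ D, ∑ γ ∈ E, e :=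
          Finset.sum_le_sum (fun c hc => Finset.sum_le_sum (fun γ hγ => hbound c hc γ hγ))
      _ = D.card * (E.card * e) := by
          rw [Finset.sum_congr rfl (fun c _ => Finset.sum_const e), Finset.sum_const,
            smul_eq_mul, smul_eq_mul]
  -- positivity
  have hDpos : 0 < D.card := Finset.card_pos.mpr ⟨cδ, hDmem⟩
  have hEpos : 0 < E.card := Finset.card_pos.mpr ⟨ce, hEmem⟩
  have hppos : 0 < p := by
    rcases Nat.eq_zero_or_pos p with h | h
    · exfalso
      have hpz : 0 < δ * D.card := Nat.mul_pos (Nat.zero_lt_of_lt hδ2) hDpos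
      have h2z := hnp
      rw [h, mul_zero] at h2z
      exact (Nat.ne_of_gt hpz) h2z.symm
    · exact h
  have hqpos : 0 < q := by
    rcases Nat.eq_zero_or_pos q with h | h
    · exfalso
      have hqz : 0 < e * E.card := Nat.mul_pos (Nat.zero_lt_of_lt heδ) hEpos
      have h2z := hnq
      rw [h, mul_zero] at h2z
      exact (Nat.ne_of_gt hqz) h2z.symm
    · exact h
  -- final contradiction
  have hkey : (2 * δ) * (n * (p * q) * e) ≤ n * (n * (p * q) * e) := by
    calc (2 * δ) * (n * (p * q) * e) = (2 * (n * (p * q))) * (δ * e) := by ring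
      _ ≤ (D.card * (E.card * e)) * (δ * e) := mul_le_mul_left hle _
      _ = (δ * D.card) * ((e * E.card) * e) := by ring
      _ = (n * p) * ((n * q) * e) := by rw [hnp, hnq]
      _ = n * (n * (p * q) * e) := by ring
  have hXpos : 0 < n * (p * q) * e :=
    Nat.mul_pos (Nat.mul_pos hn0 (Nat.mul_pos hppos hqpos)) (Nat.zero_lt_of_lt heδ)
  have hfin : 2 * δ ≤ n := Nat.le_of_mul_le_mul_right hkey hXpos
  linarith
end
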